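/- arXiv:1305.0669 — 2 statements merged into one kernel-verified Lean document; each statement's English description precedes it below -/
import Mathlib

section
/- On the sequence I_n = ⟨1,2,…,k,k+1,k,…,2⟩^n, FWF faults on every request, i.e., FWF(I_n) = 2kn. -/
/-- One step of LRU with cache size `k`: cache is a list of pages, most
recently used first; returns the new cache and whether the request faulted. -/
def lruStep (k : ℕ) (c : List ℕ) (p : ℕ) : List ℕ × Bool :=
  if p ∈ c then (p :: c.erase p, false) else ((p :: c).take k, true)

/-- One step of FIFO with cache size `k`: cache is a list of pages, most
recently entered first. -/
def fifoStep (k : ℕ) (c : List ℕ) (p : ℕ) : List ℕ × Bool :=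
  if p ∈ c then (c, false) else ((p :: c).take k, true)

/-- One step of FWF (flush-when-full) with cache size `k`. -/
def fwfStep (k : ℕ) (c : List ℕ) (p : ℕ) : List ℕ × Bool :=
  if p ∈ c then (c, false)
  else if c.length = k then ([p], true) else (p :: c, true)

/-- Number of faults incurred by an algorithm given by `step`, starting from
an empty cache, on the request sequence `I`. -/
def runCost (step : List ℕ → ℕ → List ℕ × Bool) (I : List ℕ) : ℕ :=
  (I.foldl (fun s p => ((step s.1 p).1, s.2 + if (step s.1 p).2 then 1 else 0))
    (([] : List ℕ), 0)).2

/-- Number of faults of LRU with cache size `k` on sequence `I`. -/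
def lruCost (k : ℕ) (I : List ℕ) : ℕ := runCost (lruStep k) I

/-- Number of faults of FIFO with cache size `k` on sequence `I`. -/
def fifoCost (k : ℕ) (I : List ℕ) : ℕ := runCost (fifoStep k) I

/-- Number of faults of FWF with cache size `k` on sequence `I`. -/
def fwfCost (k : ℕ) (I : List ℕ) : ℕ := runCost (fwfStep k) I

/-- `n`-fold concatenation of the list `l`. -/
def repeatList (l : List ℕ) (n : ℕ) : List ℕ := (List.replicate n l).flatten

/-- The block `⟨1, 2, …, k, k+1, k, …, 2⟩` of length `2k`. -/
def pathBlock (k : ℕ) : List ℕ := List.range' 1 (k + 1) ++ (List.range' 2 (k - 1)).reverse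

/-!
Each block of `I_n` is `1`, the ascent `2, …, k`, the page `k + 1`, and the descent `k, …, 2`.
If the cache is empty or full and misses page `1`, the request `1` faults and leaves the cache
`{1}`; the ascent then faults `k - 1` times and fills the cache, so `k + 1` faults and flushes it
to `{k + 1}`, and the descent faults `k - 1` times more. The block ends with the full cache
`{2, …, k + 1}`, which misses `1` again.
-/

def costStep (step : List ℕ → ℕ → List ℕ × Bool) (s : List ℕ × ℕ) (p : ℕ) : List ℕ × ℕ :=
  ((step s.1 p).1, s.2 + if (step s.1 p).2 then 1 else 0)

theorem runCost_eq_foldl (step : List ℕ → ℕ → List ℕ × Bool) (I : List ℕ) :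
    runCost step I = (I.foldl (costStep step) ([], 0)).2 :=
  rfl

section FWF

variable {k : ℕ} {c : List ℕ} {p m : ℕ}

theorem fwfStep_of_not_mem_of_length_ne (hp : p ∉ c) (hc : c.length ≠ k) :
    fwfStep k c p = (p :: c, true) := by
  simp [fwfStep, hp, hc]

theorem fwfStep_of_not_mem_of_length_eq (hp : p ∉ c) (hc : c.length = k) :
    fwfStep k c p = ([p], true) := by
  simp [fwfStep, hp, hc]

theorem foldl_costStep_fwfStep_of_disjoint {l : List ℕ} (hl : l.Nodup) (hlc : l.Disjoint c)
    (hlen : c.length + l.length ≤ k) :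
    l.foldl (costStep (fwfStep k)) (c, m) = (l.reverse ++ c, m + l.length) := by
  induction l generalizing c m with
  | nil => simp
  | cons q l ih =>
    obtain ⟨hq, hl⟩ := List.nodup_cons.1 hl
    obtain ⟨hqc, hlc⟩ := List.disjoint_cons_left.1 hlc
    have hstep : costStep (fwfStep k) (c, m) q = (q :: c, m + 1) := by
      rw [costStep, fwfStep_of_not_mem_of_length_ne (k := k) hqc (by simp at hlen; omega)]
      rfl
    rw [List.foldl_cons, hstep, ih hl (List.disjoint_cons_right.2 ⟨hq, hlc⟩)]
    · simp only [List.reverse_cons, List.append_assoc, List.singleton_append, List.length_cons]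
      ring_nf
    · simp only [List.length_cons] at hlen ⊢
      omega

theorem range'_two_append_singleton (hk : 1 ≤ k) :
    List.range' 2 (k - 1) ++ [k + 1] = List.range' 2 k := by
  obtain ⟨j, rfl⟩ := Nat.exists_eq_add_of_le' hk
  rw [Nat.add_sub_cancel, List.range'_concat]
  congr 2
  omega

theorem pathBlock_eq (hk : 1 ≤ k) :
    pathBlock k = 1 :: (List.range' 2 (k - 1) ++ [k + 1] ++ (List.range' 2 (k - 1)).reverse) := by
  rw [pathBlock, range'_two_append_singleton hk, List.range'_succ]
  rfl

theorem foldl_costStep_fwfStep_pathBlock (hk : 2 ≤ k) (h1 : 1 ∉ c) (hc : c = [] ∨ c.length = k) :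
    (pathBlock k).foldl (costStep (fwfStep k)) (c, m) = (List.range' 2 k, m + 2 * k) := by
  set up := List.range' 2 (k - 1) with hup_def
  have hup : up.Nodup := List.nodup_range'
  have hlen : up.length = k - 1 := List.length_range'
  have hfirst : costStep (fwfStep k) (c, m) 1 = ([1], m + 1) := by
    rcases hc with rfl | hc
    · rw [costStep, fwfStep_of_not_mem_of_length_ne (k := k) List.not_mem_nil (by simp; omega)]
      rfl
    · rw [costStep, fwfStep_of_not_mem_of_length_eq h1 hc]
      rfl
  have hascent := foldl_costStep_fwfStep_of_disjoint (k := k) (m := m + 1) hup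
    (c := [1]) (by simp [hup_def, List.mem_range'_1]) (by simp; omega)
  have hpeak : costStep (fwfStep k) (up.reverse ++ [1], m + 1 + up.length) (k + 1)
      = ([k + 1], m + k + 1) := by
    rw [costStep, fwfStep_of_not_mem_of_length_eq (by simp [hup_def, List.mem_range'_1]; omega)
      (by simp; omega)]
    simp only [if_true, hlen, Prod.mk.injEq, true_and]
    omega
  have hdescent := foldl_costStep_fwfStep_of_disjoint (k := k) (m := m + k + 1)
    (List.nodup_reverse.2 hup) (c := [k + 1]) (by simp [hup_def, List.mem_range'_1]; omega)
    (by simp; omega)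
  rw [pathBlock_eq (by omega), List.foldl_cons, hfirst, List.foldl_append, List.foldl_append,
    hascent, List.foldl_cons, hpeak, List.foldl_nil, hdescent, List.reverse_reverse,
    range'_two_append_singleton (by omega), List.length_reverse, hlen]
  congr 1
  omega

theorem foldl_costStep_fwfStep_repeatList (hk : 2 ≤ k) (n : ℕ) (h1 : 1 ∉ c)
    (hc : c = [] ∨ c.length = k) :
    ((repeatList (pathBlock k) n).foldl (costStep (fwfStep k)) (c, m)).2 = m + 2 * k * n := by
  induction n generalizing c m with
  | zero => simp [repeatList]
  | succ n ih =>
    rw [repeatList, List.replicate_succ, List.flatten_cons, List.foldl_append,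
      foldl_costStep_fwfStep_pathBlock hk h1 hc, ← repeatList,
      ih (by simp [List.mem_range'_1]) (Or.inr List.length_range')]
    ring

end FWF

/-- On `I_n = ⟨1, 2, …, k, k+1, k, …, 2⟩^n`, FWF faults on every request:
`FWF(I_n) = 2kn`. -/
theorem stmt5 (k : ℕ) (hk : 2 ≤ k) :
    ∀ n, fwfCost k (repeatList (pathBlock k) n) = 2 * k * n := by
  intro n
  rw [fwfCost, runCost_eq_foldl,
    foldl_costStep_fwfStep_repeatList hk n List.not_mem_nil (Or.inl rfl), zero_add]
end

section
/- On the star graph, for I_n = ⟨P, J^n⟩ with P = ⟨1,s,…,k−1,s,k−2,s,…,1,s⟩ and J = B^{k−1} where B = ⟨k,s,k−1,s,…,1,s⟩, LRU(I_n) = k + (k−1)kn and FIFO(I_n) = k + (k+1)n, so lim (FIFO(I_n) − LRU(I_n))/|I_n| = −1/2 + (k+1)/(2k(k−1)). -/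
/-- `P = ⟨1,s,2,s,…,k−1,s,k−2,s,…,1,s⟩` on the star graph, center `s = 0`. -/
def starP16 (k : ℕ) : List ℕ :=
  (List.range' 1 (k - 1) ++ (List.range' 1 (k - 2)).reverse).flatMap (fun i => [i, 0])

/-- `B = ⟨k,s,k−1,s,…,1,s⟩` on the star graph, center `s = 0`. -/
def starB16 (k : ℕ) : List ℕ := ((List.range' 1 k).reverse).flatMap (fun i => [i, 0])

/-- `I_n = ⟨P, J^n⟩` where `J = B^{k−1}`. -/
def starSeq16 (k n : ℕ) : List ℕ :=
  starP16 k ++ repeatList (repeatList (starB16 k) (k - 1)) n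

/-!
On the star, LRU never evicts the center `s = 0`: on a sequence of pairs `⟨i, s⟩` it behaves like
LRU with `k - 1` slots on the leaves alone. After `P` these slots hold the leaves `1, …, k - 1`,
and every `B` requests the `k` leaves cyclically, so each leaf request faults.

FIFO is a queue holding `k` of the `k + 1` pages `0, …, k`. After `P`, and again after every `J`,
it holds all pages but `k`. The first `B` of `J` faults on `k`, `1` and `s` (evicting `1`, `s`
and `2`), and its `c`-th copy, `2 ≤ c ≤ k - 1`, faults only on `c`, evicting `c + 1`.
-/

open Filter Topology in
theorem tendsto_affine_div_affine {a b c d : ℝ} (hd : d ≠ 0) :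
    Tendsto (fun n : ℕ => (a + b * n) / (c + d * n)) atTop (𝓝 (b / d)) := by
  have h := ((tendsto_const_div_atTop_nhds_zero_nat a).add_const b).div
    ((tendsto_const_div_atTop_nhds_zero_nat c).add_const d) (by simpa using hd)
  rw [zero_add, zero_add] at h
  refine h.congr' ((eventually_ne_atTop 0).mono fun n hn => ?_)
  have hn : (n : ℝ) ≠ 0 := Nat.cast_ne_zero.2 hn
  simp only [Pi.div_apply]
  field_simp

namespace StarPaging

open List

def run (step : List ℕ → ℕ → List ℕ × Bool) : List ℕ → List ℕ → List ℕ × ℕ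
  | c, [] => (c, 0)
  | c, p :: I =>
    ((run step (step c p).1 I).1, (if (step c p).2 then 1 else 0) + (run step (step c p).1 I).2)

variable {step : List ℕ → ℕ → List ℕ × Bool}

theorem foldl_eq_run (I c : List ℕ) (a : ℕ) :
    I.foldl (fun s p => ((step s.1 p).1, s.2 + if (step s.1 p).2 then 1 else 0)) (c, a) =
      ((run step c I).1, a + (run step c I).2) := by
  induction I generalizing c a with
  | nil => rfl
  | cons p I ih => simp only [foldl_cons, run, ih, Nat.add_assoc]

theorem runCost_eq_run (I : List ℕ) : runCost step I = (run step [] I).2 := by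
  rw [runCost, foldl_eq_run, Nat.zero_add]

theorem run_append (c l₁ l₂ : List ℕ) :
    run step c (l₁ ++ l₂) =
      ((run step (run step c l₁).1 l₂).1,
        (run step c l₁).2 + (run step (run step c l₁).1 l₂).2) := by
  induction l₁ generalizing c with
  | nil => simp [run]
  | cons p l ih => simp only [cons_append, run, ih, Nat.add_assoc]

theorem run_append_of_eq {c c₁ c₂ l₁ l₂ : List ℕ} {a₁ a₂ : ℕ} (h₁ : run step c l₁ = (c₁, a₁))
    (h₂ : run step c₁ l₂ = (c₂, a₂)) : run step c (l₁ ++ l₂) = (c₂, a₁ + a₂) := by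
  rw [run_append, h₁, h₂]

theorem repeatList_succ (l : List ℕ) (n : ℕ) : repeatList l (n + 1) = l ++ repeatList l n := by
  simp [repeatList, replicate_succ]

theorem run_repeatList_of_eq {c l : List ℕ} {a : ℕ} (h : run step c l = (c, a)) (n : ℕ) :
    run step c (repeatList l n) = (c, n * a) := by
  induction n with
  | zero => simp [repeatList, run]
  | succ n ih =>
    rw [repeatList_succ, run_append_of_eq h ih]
    congr 1; ring

theorem forall_mem_flatMap_pair {P : ℕ → Prop} {l : List ℕ} (h0 : P 0) (hl : ∀ i ∈ l, P i) :
    ∀ p ∈ l.flatMap (fun i => [i, 0]), P p := by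
  simp only [mem_flatMap, mem_cons, not_mem_nil, or_false]
  rintro p ⟨i, hi, rfl | rfl⟩
  exacts [hl p hi, h0]

theorem lru_run_of_fresh {k : ℕ} {c l : List ℕ} (hl : l.Nodup) (hfresh : ∀ p ∈ l, p ∉ c)
    (hlen : c.length + l.length ≤ k) : run (lruStep k) c l = (l.reverse ++ c, l.length) := by
  induction l generalizing c with
  | nil => rfl
  | cons p l ih =>
    have hstep : lruStep k c p = (p :: c, true) := by
      simp only [lruStep, hfresh p mem_cons_self, if_false]
      rw [take_of_length_le (by simp at hlen ⊢; omega)]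
    rw [run, hstep, ih (nodup_cons.1 hl).2]
    · simp [Nat.add_comm]
    · intro q hq hq'
      rcases mem_cons.1 hq' with rfl | hq'
      · exact (nodup_cons.1 hl).1 hq
      · exact hfresh q (mem_cons_of_mem _ hq) hq'
    · simp at hlen ⊢; omega

theorem lru_run_of_mem {k : ℕ} {c l : List ℕ} (hc : c.Nodup) (hl : l.Nodup)
    (hmem : ∀ p ∈ l, p ∈ c) : run (lruStep k) c l = (l.reverse ++ c.filter (· ∉ l), 0) := by
  induction l generalizing c with
  | nil => simp [run]
  | cons p l ih =>
    obtain ⟨hpl, hl⟩ := nodup_cons.1 hl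
    have hstep : lruStep k c p = (p :: c.erase p, false) := by
      simp [lruStep, hmem p mem_cons_self]
    rw [run, hstep, ih ((hc.erase p).cons (hc.not_mem_erase)) hl]
    · have hfilter : (c.erase p).filter (· ∉ l) = c.filter (· ∉ p :: l) := by
        rw [hc.erase_eq_filter, filter_filter]
        exact filter_congr fun x _ => by grind
      rw [filter_cons_of_pos (by simpa using hpl), hfilter]
      simp
    · intro q hq
      by_cases hqp : q = p
      · exact hqp ▸ mem_cons_self
      · exact mem_cons_of_mem _ ((mem_erase_of_ne hqp).2 (hmem q (mem_cons_of_mem _ hq)))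

theorem lruStep_reverse_of_not_mem {b : ℕ} {t : List ℕ} (hb : b ∉ t) (ht : t ≠ []) :
    lruStep t.length t.reverse b = ((t.tail ++ [b]).reverse, true) := by
  obtain ⟨a, t, rfl⟩ := exists_cons_of_ne_nil ht
  simp_all [lruStep]

/-- In the cyclic sequence `(u ++ v)^∞` of `k + 1` distinct pages each request was last made
`k + 1` steps earlier, so LRU faults on it; after `u` the cache holds the `k` latest requests
`(v ++ u).tail`, most recent first. -/
theorem lru_run_prefix_of_cycle {k : ℕ} (hk : 0 < k) {u v : List ℕ} (hL : (u ++ v).Nodup)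
    (hlen : (u ++ v).length = k + 1) :
    run (lruStep k) (u ++ v).tail.reverse u = ((v ++ u).tail.reverse, u.length) := by
  induction u using reverseRecOn generalizing v with
  | nil => simp [run]
  | append_singleton u b ih =>
    rw [append_assoc, singleton_append] at hL hlen ⊢
    have ht : (v ++ u).length = k := by simp at hlen ⊢; omega
    have hb : b ∉ v ++ u := by
      rw [nodup_append, nodup_cons] at hL
      simp only [mem_append, not_or]
      exact ⟨hL.2.1.1, fun h => hL.2.2 b h b mem_cons_self rfl⟩
    have hstep := lruStep_reverse_of_not_mem hb (ne_nil_of_length_pos (ht ▸ hk))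
    rw [ht] at hstep
    have hlast :
        run (lruStep k) (b :: v ++ u).tail.reverse [b] = ((v ++ (u ++ [b])).tail.reverse, 1) := by
      have hne : v ++ u ≠ [] := ne_nil_of_length_pos (by omega)
      rw [cons_append, tail_cons, run, hstep, ← append_assoc,
        tail_append_of_ne_nil (xs := v ++ u) hne]
      rfl
    rw [run_append_of_eq (ih hL hlen) hlast, length_append, length_singleton]

theorem lru_run_cycle {k : ℕ} (hk : 0 < k) {L : List ℕ} (hL : L.Nodup) (hlen : L.length = k + 1) :
    run (lruStep k) L.tail.reverse L = (L.tail.reverse, k + 1) := by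
  simpa [hlen] using
    lru_run_prefix_of_cycle hk (u := L) (v := []) (by simpa using hL) (by simpa using hlen)

theorem lru_run_flatMap_pair {k : ℕ} (hk : 2 ≤ k) {l : List ℕ} (hl : ∀ i ∈ l, i ≠ 0)
    (c : List ℕ) :
    run (lruStep k) (0 :: c) (l.flatMap fun i => [i, 0]) =
      (run (lruStep (k - 1)) c l).map (cons 0) id := by
  obtain ⟨k, rfl⟩ : ∃ m, k = m + 2 := ⟨k - 2, by omega⟩
  rw [show k + 2 - 1 = k + 1 by omega]
  induction l generalizing c with
  | nil => rfl
  | cons i l ih =>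
    have hi : i ≠ 0 := hl i mem_cons_self
    rw [flatMap_cons, cons_append, cons_append, nil_append]
    have hrest := ih (fun j hj => hl j (mem_cons_of_mem _ hj))
    by_cases h : i ∈ c
    · have h₁ : lruStep (k + 2) (0 :: c) i = (i :: 0 :: c.erase i, false) := by
        simp [lruStep, h, erase_cons_tail, Ne.symm hi]
      have h₂ : lruStep (k + 2) (i :: 0 :: c.erase i) 0 = (0 :: i :: c.erase i, false) := by
        simp [lruStep, erase_cons_tail, hi]
      have h₃ : lruStep (k + 1) c i = (i :: c.erase i, false) := by simp [lruStep, h]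
      simp [run, h₁, h₂, h₃, hrest, Prod.map]
    · have h₁ : lruStep (k + 2) (0 :: c) i = (i :: 0 :: c.take k, true) := by
        simp [lruStep, h, hi]
      have h₂ : lruStep (k + 2) (i :: 0 :: c.take k) 0 = (0 :: i :: c.take k, false) := by
        simp [lruStep, erase_cons_tail, hi]
      have h₃ : lruStep (k + 1) c i = (i :: c.take k, true) := by
        simp [lruStep, h]
      simp [run, h₁, h₂, h₃, hrest, Prod.map]

theorem fifo_run_of_mem {k : ℕ} {c l : List ℕ} (hmem : ∀ p ∈ l, p ∈ c) :
    run (fifoStep k) c l = (c, 0) := by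
  induction l with
  | nil => rfl
  | cons p l ih =>
    simp [run, fifoStep, hmem p mem_cons_self, ih fun q hq => hmem q (mem_cons_of_mem _ hq)]

theorem fifo_run_of_single_miss {k a x : ℕ} {c c' l₁ l₂ : List ℕ} (hlen : c.length = k)
    (h₁ : ∀ p ∈ l₁, p ∈ c) (ha : a ∉ c) (hevict : a :: c = c' ++ [x]) (h₂ : ∀ p ∈ l₂, p ∈ c') :
    run (fifoStep k) c (l₁ ++ a :: l₂) = (c', 1) := by
  have hc' : c'.length = k := by simpa [hlen] using (congrArg length hevict).symm
  have hstep : fifoStep k c a = (c', true) := by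
    rw [fifoStep, if_neg ha, hevict, take_left' hc']
  have hmiss : run (fifoStep k) c (a :: l₂) = (c', 1) := by
    rw [run, hstep, fifo_run_of_mem h₂]; rfl
  simpa using run_append_of_eq (fifo_run_of_mem h₁) hmiss

theorem fifo_run_flatMap_pair_of_fresh {k : ℕ} {c l : List ℕ} (h0 : 0 ∈ c) (hl : l.Nodup)
    (hfresh : ∀ p ∈ l, p ∉ c) (hlen : c.length + l.length ≤ k) :
    run (fifoStep k) c (l.flatMap fun i => [i, 0]) = (l.reverse ++ c, l.length) := by
  induction l generalizing c with
  | nil => rfl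
  | cons p l ih =>
    have hstep : fifoStep k c p = (p :: c, true) := by
      simp only [fifoStep, hfresh p mem_cons_self, if_false]
      rw [take_of_length_le (by simp at hlen ⊢; omega)]
    have hrest := ih (c := p :: c) (mem_cons_of_mem _ h0) (nodup_cons.1 hl).2 (by
      intro q hq hq'
      rcases mem_cons.1 hq' with rfl | hq'
      · exact (nodup_cons.1 hl).1 hq
      · exact hfresh q (mem_cons_of_mem _ hq) hq') (by simp at hlen ⊢; omega)
    have h0step : fifoStep k (p :: c) 0 = (p :: c, false) := by
      simp [fifoStep, mem_cons_of_mem _ h0]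
    rw [flatMap_cons, cons_append, cons_append, nil_append, run, hstep, run, h0step, hrest]
    simp [Nat.add_comm]

theorem starP16_eq {k : ℕ} (hk : 2 ≤ k) :
    starP16 k =
      [1, 0] ++ (range' 2 (k - 2) ++ (range' 1 (k - 2)).reverse).flatMap (fun i => [i, 0]) := by
  rw [starP16, show k - 1 = k - 2 + 1 by omega, range'_succ]
  rfl

theorem starB16_eq_append {k c : ℕ} (hc : 1 ≤ c) (hck : c ≤ k) :
    starB16 k = (range' (c + 1) (k - c)).reverse.flatMap (fun i => [i, 0]) ++
      c :: 0 :: (range' 1 (c - 1)).reverse.flatMap (fun i => [i, 0]) := by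
  have h : range' 1 k = range' 1 (c - 1) ++ c :: range' (c + 1) (k - c) :=
    range'_eq_append_iff.2 ⟨c - 1, by omega, rfl,
      (range'_eq_cons_iff.2 ⟨by omega, by omega, by congr 1; omega⟩).symm⟩
  simp [starB16, h]

theorem length_starSeq16 {k : ℕ} (hk : 2 ≤ k) (n : ℕ) :
    (starSeq16 k n).length = 2 * (2 * k - 3) + 2 * k * (k - 1) * n := by
  have hrep : ∀ (l : List ℕ) (m : ℕ), (repeatList l m).length = m * l.length := fun l m => by
    simp [repeatList, sum_replicate]
  obtain ⟨m, rfl⟩ : ∃ m, k = m + 2 := ⟨k - 2, by omega⟩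
  simp [starSeq16, starP16, starB16, hrep, length_flatMap,
    show 2 * (m + 2) - 3 = 2 * m + 1 by omega]
  ring

theorem lru_run_starP16 {k : ℕ} (hk : 3 ≤ k) :
    run (lruStep k) [] (starP16 k) = (0 :: range' 1 (k - 1), k) := by
  have hrange : range' 1 (k - 1) = 1 :: range' 2 (k - 2) := by
    rw [show k - 1 = k - 2 + 1 by omega, range'_succ]
  have hrange' : range' 1 (k - 1) = range' 1 (k - 2) ++ [k - 1] := by
    rw [show k - 1 = k - 2 + 1 by omega, range'_concat]; congr 2; omega
  have hfirst : run (lruStep k) [] [1, 0] = ([0, 1], 2) := by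
    have h₁ : take k [1] = [1] := take_of_length_le (by simp; omega)
    have h₂ : take k [0, 1] = [0, 1] := take_of_length_le (by simp; omega)
    simp [run, lruStep, h₁, h₂]
  have hfill :
      run (lruStep (k - 1)) [1] (range' 2 (k - 2)) = ((range' 1 (k - 1)).reverse, k - 2) := by
    rw [lru_run_of_fresh nodup_range' (fun p hp => by simp at hp ⊢; omega) (by simp; omega), hrange]
    simp
  have hhits : run (lruStep (k - 1)) (range' 1 (k - 1)).reverse (range' 1 (k - 2)).reverse =
      (range' 1 (k - 1), 0) := by
    rw [lru_run_of_mem (nodup_reverse.2 nodup_range') (nodup_reverse.2 nodup_range')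
      (by simp; omega)]
    conv_rhs => rw [hrange']
    simp only [reverse_reverse, append_cancel_left_eq, Prod.mk.injEq, and_true]
    have hnil : (range' 1 (k - 2)).reverse.filter (· ∉ (range' 1 (k - 2)).reverse) = [] :=
      filter_eq_nil_iff.2 fun x hx => by simp at hx ⊢; omega
    rw [hrange', reverse_append, filter_append, hnil]
    simp; omega
  have hrest : run (lruStep k) [0, 1]
      ((range' 2 (k - 2) ++ (range' 1 (k - 2)).reverse).flatMap fun i => [i, 0]) =
        (0 :: range' 1 (k - 1), k - 2) := by
    rw [lru_run_flatMap_pair (by omega) (fun i hi => by simp at hi; omega),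
      run_append_of_eq hfill hhits]
    rfl
  rw [starP16_eq (by omega), run_append_of_eq hfirst hrest]
  congr 1; omega

theorem lru_run_starB16 {k : ℕ} (hk : 2 ≤ k) :
    run (lruStep k) (0 :: range' 1 (k - 1)) (starB16 k) = (0 :: range' 1 (k - 1), k) := by
  have hL : (range' 1 k).reverse.tail.reverse = range' 1 (k - 1) := by
    rw [show k = k - 1 + 1 by omega, range'_concat]; simp
  have hcycle := lru_run_cycle (k := k - 1) (L := (range' 1 k).reverse) (by omega)
    (nodup_reverse.2 nodup_range') (by simp; omega)
  rw [hL] at hcycle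
  rw [starB16, lru_run_flatMap_pair hk (fun i hi => by simp at hi; omega), hcycle]
  simp; omega

theorem lru_run_starSeq16 {k : ℕ} (hk : 3 ≤ k) (n : ℕ) :
    run (lruStep k) [] (starSeq16 k n) = (0 :: range' 1 (k - 1), k + n * ((k - 1) * k)) :=
  run_append_of_eq (lru_run_starP16 hk)
    (run_repeatList_of_eq (run_repeatList_of_eq (lru_run_starB16 (by omega)) _) n)

/-- The FIFO cache, newest page first, holding every page of `{0, …, k}` except `c`
(for `2 ≤ c ≤ k`). -/
def fifoCache (k c : ℕ) : List ℕ :=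
  (range' 2 (c - 2)).reverse ++ 0 :: 1 :: (range' (c + 1) (k - c)).reverse

theorem mem_fifoCache {k c x : ℕ} (hc : 2 ≤ c) (hck : c ≤ k) :
    x ∈ fifoCache k c ↔ x ≤ k ∧ x ≠ c := by
  simp [fifoCache]; omega

theorem length_fifoCache {k c : ℕ} (hc : 2 ≤ c) (hck : c ≤ k) : (fifoCache k c).length = k := by
  simp [fifoCache]; omega

theorem fifoCache_self (k : ℕ) : fifoCache k k = (range' 2 (k - 2)).reverse ++ [0, 1] := by
  simp [fifoCache]

theorem cons_fifoCache {k c : ℕ} (hc : 2 ≤ c) (hck : c < k) :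
    c :: fifoCache k c = fifoCache k (c + 1) ++ [c + 1] := by
  have h₁ : range' 2 (c - 1) = range' 2 (c - 2) ++ [c] := by
    rw [show c - 1 = c - 2 + 1 by omega, range'_concat]; congr 2; omega
  have h₂ : range' (c + 1) (k - c) = (c + 1) :: range' (c + 1 + 1) (k - (c + 1)) := by
    rw [show k - c = k - (c + 1) + 1 by omega, range'_succ]
  simp [fifoCache, h₁, h₂]

theorem fifo_run_starP16 {k : ℕ} (hk : 3 ≤ k) :
    run (fifoStep k) [] (starP16 k) = (fifoCache k k, k) := by
  have hfirst : run (fifoStep k) [] [1, 0] = ([0, 1], 2) := by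
    have h₁ : take k [1] = [1] := take_of_length_le (by simp; omega)
    have h₂ : take k [0, 1] = [0, 1] := take_of_length_le (by simp; omega)
    simp [run, fifoStep, h₁, h₂]
  have hfill : run (fifoStep k) [0, 1] ((range' 2 (k - 2)).flatMap fun i => [i, 0]) =
      (fifoCache k k, k - 2) := by
    rw [fifo_run_flatMap_pair_of_fresh (by simp) nodup_range'
      (fun p hp => by simp at hp ⊢; omega) (by simp; omega), fifoCache_self]
    simp
  have hhits :
      run (fifoStep k) (fifoCache k k) ((range' 1 (k - 2)).reverse.flatMap fun i => [i, 0]) =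
        (fifoCache k k, 0) :=
    fifo_run_of_mem (forall_mem_flatMap_pair ((mem_fifoCache (by omega) le_rfl).2 (by omega))
      fun i hi => (mem_fifoCache (by omega) le_rfl).2 (by simp at hi; omega))
  rw [starP16_eq (by omega), flatMap_append, ← append_assoc,
    run_append_of_eq (run_append_of_eq hfirst hfill) hhits]
  congr 1; omega

theorem fifo_run_starB16_fifoCache_self {k : ℕ} (hk : 3 ≤ k) :
    run (fifoStep k) (fifoCache k k) (starB16 k) = (fifoCache k 2, 3) := by
  set mid := (range' 2 (k - 2)).reverse
  have hmem : ∀ x, x ∈ mid ↔ 2 ≤ x ∧ x < k := fun x => by simp [mid]; omega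
  have hB : starB16 k =
      ([] ++ k :: 0 :: mid.flatMap (fun i => [i, 0])) ++ ([] ++ [1]) ++ ([] ++ [0]) := by
    have h : range' 1 k = 1 :: (range' 2 (k - 2) ++ [k]) :=
      range'_eq_cons_iff.2 ⟨rfl, by omega, by
        rw [show k - 1 = k - 2 + 1 by omega, range'_concat]; congr 2; omega⟩
    simp [starB16, h, mid]
  have hmiss_k : run (fifoStep k) (fifoCache k k) ([] ++ k :: 0 :: mid.flatMap (fun i => [i, 0])) =
      (k :: mid ++ [0], 1) :=
    fifo_run_of_single_miss (length_fifoCache (by omega) le_rfl) (by simp)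
      (by simp [mem_fifoCache (show 2 ≤ k by omega) le_rfl]) (x := 1)
      (by simp [fifoCache_self, mid])
      (forall_mem_cons.2 ⟨by simp, forall_mem_flatMap_pair (by simp) fun i hi => by simp [hi]⟩)
  have hmiss_1 : run (fifoStep k) (k :: mid ++ [0]) ([] ++ [1]) = (1 :: k :: mid, 1) :=
    fifo_run_of_single_miss (by simp [mid]; omega) (by simp) (by simp [hmem]; omega) (x := 0)
      (by simp) (by simp)
  have hmiss_0 : run (fifoStep k) (1 :: k :: mid) ([] ++ [0]) = (fifoCache k 2, 1) := by
    refine fifo_run_of_single_miss (by simp [mid]; omega) (by simp) (by simp [hmem]; omega)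
      (x := 2) ?_ (by simp)
    have e₁ : range' 2 (k - 1) = 2 :: range' 3 (k - 2) :=
      range'_eq_cons_iff.2 ⟨rfl, by omega, by congr 1⟩
    have e₂ : range' 2 (k - 1) = range' 2 (k - 2) ++ [k] := by
      rw [show k - 1 = k - 2 + 1 by omega, range'_concat]; congr 2; omega
    have h : range' 2 (k - 2) ++ [k] = 2 :: range' 3 (k - 2) := by rw [← e₁, e₂]
    have hrev : k :: (range' 2 (k - 2)).reverse = (range' 3 (k - 2)).reverse ++ [2] := by
      simpa using congrArg reverse h
    simp [fifoCache, mid, hrev]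
  rw [hB, run_append_of_eq (run_append_of_eq hmiss_k hmiss_1) hmiss_0]

theorem fifo_run_starB16_of_lt {k c : ℕ} (hc : 2 ≤ c) (hck : c < k) :
    run (fifoStep k) (fifoCache k c) (starB16 k) = (fifoCache k (c + 1), 1) := by
  rw [starB16_eq_append (by omega) hck.le]
  refine fifo_run_of_single_miss (length_fifoCache hc hck.le) ?_ ?_ (cons_fifoCache hc hck) ?_
  · exact forall_mem_flatMap_pair ((mem_fifoCache hc hck.le).2 (by omega))
      fun i hi => (mem_fifoCache hc hck.le).2 (by simp at hi; omega)
  · simp [mem_fifoCache hc hck.le]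
  · exact forall_mem_cons.2 ⟨(mem_fifoCache (by omega) hck).2 (by omega),
      forall_mem_flatMap_pair ((mem_fifoCache (by omega) hck).2 (by omega))
        fun i hi => (mem_fifoCache (by omega) hck).2 (by simp at hi; omega)⟩

theorem fifo_run_repeatList_starB16 {k c : ℕ} (hc : 2 ≤ c) (t : ℕ) (hct : c + t ≤ k) :
    run (fifoStep k) (fifoCache k c) (repeatList (starB16 k) t) = (fifoCache k (c + t), t) := by
  induction t generalizing c with
  | zero => simp [repeatList, run]
  | succ t ih =>
    rw [repeatList_succ, run_append_of_eq (fifo_run_starB16_of_lt hc (by omega))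
      (ih (by omega) (by omega)), show c + 1 + t = c + (t + 1) by omega, Nat.add_comm 1 t]

theorem fifo_run_starB16_cycle {k : ℕ} (hk : 3 ≤ k) :
    run (fifoStep k) (fifoCache k k) (repeatList (starB16 k) (k - 1)) = (fifoCache k k, k + 1) := by
  rw [show k - 1 = k - 2 + 1 by omega, repeatList_succ,
    run_append_of_eq (fifo_run_starB16_fifoCache_self hk)
      (fifo_run_repeatList_starB16 le_rfl _ (by omega)), show 2 + (k - 2) = k by omega]
  congr 1; omega

theorem fifo_run_starSeq16 {k : ℕ} (hk : 3 ≤ k) (n : ℕ) :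
    run (fifoStep k) [] (starSeq16 k n) = (fifoCache k k, k + n * (k + 1)) :=
  run_append_of_eq (fifo_run_starP16 hk) (run_repeatList_of_eq (fifo_run_starB16_cycle hk) n)

end StarPaging

open Filter in
theorem stmt16_general (k : ℕ) (hk : 3 ≤ k) :
    (∀ n, lruCost k (starSeq16 k n) = k + (k - 1) * k * n ∧
      fifoCost k (starSeq16 k n) = k + (k + 1) * n) ∧
    Tendsto
      (fun n : ℕ =>
        ((fifoCost k (starSeq16 k n) : ℝ) - (lruCost k (starSeq16 k n) : ℝ)) /
          ((starSeq16 k n).length : ℝ))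
      atTop (nhds (-(1 / 2) + ((k : ℝ) + 1) / (2 * k * (k - 1)))) := by
  have hlru (n : ℕ) : lruCost k (starSeq16 k n) = k + (k - 1) * k * n := by
    rw [lruCost, StarPaging.runCost_eq_run, StarPaging.lru_run_starSeq16 hk]; ring
  have hfifo (n : ℕ) : fifoCost k (starSeq16 k n) = k + (k + 1) * n := by
    rw [fifoCost, StarPaging.runCost_eq_run, StarPaging.fifo_run_starSeq16 hk]; ring
  refine ⟨fun n => ⟨hlru n, hfifo n⟩, ?_⟩
  have hk' : (3 : ℝ) ≤ k := by exact_mod_cast hk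
  have hk0 : (k : ℝ) ≠ 0 := by positivity
  have hk1 : (k : ℝ) - 1 ≠ 0 := by linarith
  have hratio : (fun n : ℕ => ((fifoCost k (starSeq16 k n) : ℝ) - lruCost k (starSeq16 k n)) /
      (starSeq16 k n).length) = fun n : ℕ => (0 + (((k : ℝ) + 1) - (k - 1) * k) * n) /
        (2 * (2 * (k : ℝ) - 3) + 2 * k * (k - 1) * n) := by
    funext n
    rw [hlru, hfifo, StarPaging.length_starSeq16 (by omega)]
    push_cast [Nat.cast_sub (show 1 ≤ k by omega), Nat.cast_sub (show 3 ≤ 2 * k by omega)]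
    ring_nf
  rw [hratio]
  convert tendsto_affine_div_affine (a := 0) (c := 2 * (2 * k - 3))
    (by positivity : (2 * k * (k - 1) : ℝ) ≠ 0) using 2
  field_simp
  ring

open Filter in
/-- On the star graph, for `I_n = ⟨P, J^n⟩` as above,
`LRU(I_n) = k + (k−1)kn` and `FIFO(I_n) = k + (k+1)n`, so
`(FIFO(I_n) − LRU(I_n))/|I_n| → −1/2 + (k+1)/(2k(k−1))`. -/
theorem stmt16 (k N : ℕ) (hk : 3 ≤ k) (hN : k + 1 ≤ N) :
    (∀ n, lruCost k (starSeq16 k n) = k + (k - 1) * k * n ∧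
      fifoCost k (starSeq16 k n) = k + (k + 1) * n) ∧
    Tendsto
      (fun n : ℕ =>
        ((fifoCost k (starSeq16 k n) : ℝ) - (lruCost k (starSeq16 k n) : ℝ)) /
          ((starSeq16 k n).length : ℝ))
      atTop (nhds (-(1 / 2) + ((k : ℝ) + 1) / (2 * k * (k - 1)))) :=
  stmt16_general k hk
end
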